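/- arXiv:2101.07435 — 2 statements merged into one kernel-verified Lean document; each statement's English description precedes it below -/
import Mathlib

section
/- Assume all agents have additive cost functions and let α ≥ 1, n ≥ 2. Every α-EFX allocation is min{2nα/(n−1+2α), (nα+n−1)/(n−1+α)}-MMS. Moreover, for every β with 1 ≤ β < max{2nα/(2α+2n−3), 2n/(n+1)} there exists an n-agent instance with additive cost functions and an α-EFX allocation that is not β-MMS. -/
open Finset

/-- `T` is a `k`-partition of the bundle `S`: pairwise disjoint bundles whose union is `S`. -/
def IsPartitionOf {E : Type*} [DecidableEq E] {k : ℕ} (T : Fin k → Finset E) (S : Finset E) :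
    Prop :=
  (∀ i j : Fin k, i ≠ j → Disjoint (T i) (T j)) ∧ Finset.univ.biUnion T = S

/-- The maximin share of cost function `c` on `S` among `k` agents:
the minimum over `k`-partitions of `S` of the maximum cost of a bundle. -/
noncomputable def MMS {E : Type*} [DecidableEq E] (c : Finset E → ℝ) (k : ℕ) (S : Finset E) :
    ℝ :=
  sInf { m : ℝ | ∃ T : Fin k → Finset E, IsPartitionOf T S ∧ m = ⨆ j : Fin k, c (T j) }

/-- `c` is a nonnegative additive cost function. -/
def AdditiveCost {E : Type*} [DecidableEq E] (c : Finset E → ℝ) : Prop :=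
  (∀ S : Finset E, 0 ≤ c S) ∧ ∀ S : Finset E, c S = ∑ e ∈ S, c {e}

/-- `c` is a nonnegative monotone cost function with `c ∅ = 0`. -/
def MonotoneCost {E : Type*} (c : Finset E → ℝ) : Prop :=
  (∀ S : Finset E, 0 ≤ c S) ∧ c ∅ = 0 ∧ ∀ ⦃S T : Finset E⦄, S ⊆ T → c S ≤ c T

/-- `c` is subadditive. -/
def SubadditiveCost {E : Type*} [DecidableEq E] (c : Finset E → ℝ) : Prop :=
  ∀ S T : Finset E, c (S ∪ T) ≤ c S + c T

/-- `c` is submodular. -/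
def SubmodularCost {E : Type*} [DecidableEq E] (c : Finset E → ℝ) : Prop :=
  ∀ S T : Finset E, c (S ∪ T) + c (S ∩ T) ≤ c S + c T

/-- `A` is an allocation of all chores among the `n` agents. -/
def IsAllocation {E : Type*} [DecidableEq E] [Fintype E] {n : ℕ} (A : Fin n → Finset E) : Prop :=
  IsPartitionOf A Finset.univ

/-- `A` is `α`-envy-free. -/
def IsEF {E : Type*} {n : ℕ} (α : ℝ) (c : Fin n → Finset E → ℝ) (A : Fin n → Finset E) : Prop :=
  ∀ i j, c i (A i) ≤ α * c i (A j)

/-- `A` is `α`-envy-free up to one item. -/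
def IsEF1 {E : Type*} [DecidableEq E] {n : ℕ} (α : ℝ) (c : Fin n → Finset E → ℝ)
    (A : Fin n → Finset E) : Prop :=
  ∀ i j, i ≠ j → A i = ∅ ∨ ∃ e ∈ A i, c i (A i \ {e}) ≤ α * c i (A j)

/-- `A` is `α`-envy-free up to any (positive-cost) item. -/
def IsEFX {E : Type*} [DecidableEq E] {n : ℕ} (α : ℝ) (c : Fin n → Finset E → ℝ)
    (A : Fin n → Finset E) : Prop :=
  ∀ i j, i ≠ j → ∀ e ∈ A i, 0 < c i {e} → c i (A i \ {e}) ≤ α * c i (A j)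

/-- `A` is an `α`-MMS allocation. -/
def IsMMSFair {E : Type*} [DecidableEq E] [Fintype E] {n : ℕ} (α : ℝ)
    (c : Fin n → Finset E → ℝ) (A : Fin n → Finset E) : Prop :=
  ∀ i, c i (A i) ≤ α * MMS (c i) n Finset.univ

/-- `A` is an `α`-PMMS allocation. -/
def IsPMMS {E : Type*} [DecidableEq E] {n : ℕ} (α : ℝ)
    (c : Fin n → Finset E → ℝ) (A : Fin n → Finset E) : Prop :=
  ∀ i j, i ≠ j → c i (A i) ≤ α * MMS (c i) 2 (A i ∪ A j)

/-- The optimal (minimum) social cost over all allocations. -/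
noncomputable def OPT {E : Type*} [DecidableEq E] [Fintype E] {n : ℕ}
    (c : Fin n → Finset E → ℝ) : ℝ :=
  sInf { s : ℝ | ∃ A : Fin n → Finset E, IsAllocation A ∧ s = ∑ i, c i (A i) }

/-!
Upper bound: let `s` be the cost of a cheapest positive-cost chore in `A i`. EFX against each of
the `n - 1` other bundles, summed, gives `(n - 1) (c(A i) - s) ≤ α (c(E) - c(A i))`, while
`c(E) ≤ n · MMS` and `s ≤ MMS`. Either `A i` holds a single positive-cost chore, so `c(A i) = s`,
or `2 s ≤ c(A i)`; solving for `c(A i)` in the two cases yields the two ratios.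

Lower bound: arrange the chores in an `n × n` grid, give row `0` to agent `0` and the other rows to
agents who are indifferent to every chore. The columns are an `n`-partition, so agent `0`'s MMS is
at most its largest column cost. Weights `n α` on row `0` and `n - 1` elsewhere give the first
ratio; two chores of weight `n (n - 1)` on row `0`, and weights `1, 1, n + 1, …, n + 1` on every
other row, give `2n / (n + 1)`.
-/

namespace AdditiveCost

variable {E : Type*} [DecidableEq E] {c : Finset E → ℝ}

theorem mono (hc : AdditiveCost c) {S T : Finset E} (hST : S ⊆ T) : c S ≤ c T := by
  rw [hc.2 S, hc.2 T]
  exact Finset.sum_le_sum_of_subset_of_nonneg hST fun e _ _ => hc.1 {e}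

theorem sdiff_singleton (hc : AdditiveCost c) {S : Finset E} {e : E} (he : e ∈ S) :
    c (S \ {e}) = c S - c {e} := by
  rw [← Finset.erase_eq, hc.2, hc.2 S, Finset.sum_erase_eq_sub he]

theorem sum_of_isPartitionOf (hc : AdditiveCost c) {k : ℕ} {T : Fin k → Finset E}
    {S : Finset E} (hT : IsPartitionOf T S) : ∑ j, c (T j) = c S := by
  rw [← hT.2, hc.2, Finset.sum_biUnion fun a _ b _ hab => hT.1 a b hab]
  exact Finset.sum_congr rfl fun j _ => hc.2 (T j)

theorem exists_pos_singleton_eq_or_two_mul_le (hc : AdditiveCost c) {S : Finset E}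
    (hS : 0 < c S) : ∃ e ∈ S, 0 < c {e} ∧ (c S = c {e} ∨ 2 * c {e} ≤ c S) := by
  set P := S.filter fun e => 0 < c {e}
  have hPS : ∑ e ∈ P, c {e} = c S := by
    rw [hc.2 S]
    exact Finset.sum_filter_of_ne fun e _ he => (hc.1 {e}).lt_of_ne' he
  have hP : P.Nonempty := Finset.nonempty_of_sum_ne_zero (hPS ▸ hS.ne')
  obtain ⟨e₀, he₀, hmin⟩ := Finset.exists_min_image P (fun e => c {e}) hP
  obtain ⟨he₀S, he₀pos⟩ := Finset.mem_filter.mp he₀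
  refine ⟨e₀, he₀S, he₀pos, ?_⟩
  rcases hP.exists_eq_singleton_or_nontrivial with ⟨e, hPe⟩ | hPnt
  · obtain rfl : e₀ = e := Finset.mem_singleton.mp (hPe ▸ he₀)
    exact Or.inl (by rw [← hPS, hPe, Finset.sum_singleton])
  · obtain ⟨e₁, he₁, hne⟩ := hPnt.exists_ne e₀
    have hpair : c {e₀, e₁} = c {e₀} + c {e₁} := by
      rw [hc.2, Finset.sum_pair hne.symm]
    have hsub : ({e₀, e₁} : Finset E) ⊆ S :=
      Finset.insert_subset he₀S (Finset.singleton_subset_iff.mpr (Finset.mem_filter.mp he₁).1)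
    exact Or.inr (by linarith [hmin e₁ he₁, hc.mono hsub])

end AdditiveCost

section MaximinShare

variable {E : Type*} [DecidableEq E] {c : Finset E → ℝ} {k : ℕ} {S : Finset E}

theorem MMS_le_iSup (hc : ∀ S, 0 ≤ c S) {T : Fin k → Finset E} (hT : IsPartitionOf T S) :
    MMS c k S ≤ ⨆ j, c (T j) := by
  refine csInf_le ⟨0, ?_⟩ ⟨T, hT, rfl⟩
  rintro m ⟨T', -, rfl⟩
  exact Real.iSup_nonneg fun j => hc (T' j)

theorem le_MMS (hk : 0 < k) {b : ℝ}
    (hb : ∀ T : Fin k → Finset E, IsPartitionOf T S → b ≤ ⨆ j, c (T j)) : b ≤ MMS c k S := by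
  have hS : IsPartitionOf (fun j : Fin k => if j = ⟨0, hk⟩ then S else ∅) S := by
    refine ⟨fun i j hij => ?_, ?_⟩
    · by_cases hi : i = ⟨0, hk⟩
      · simp [hi, Ne.symm (hi ▸ hij)]
      · simp [hi]
    · ext e
      simp only [Finset.mem_biUnion, Finset.mem_univ, true_and]
      refine ⟨fun ⟨j, hj⟩ => ?_, fun he => ⟨⟨0, hk⟩, by simpa using he⟩⟩
      split_ifs at hj
      exacts [hj, absurd hj (Finset.notMem_empty e)]
  refine le_csInf ⟨_, _, hS, rfl⟩ ?_
  rintro m ⟨T, hT, rfl⟩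
  exact hb T hT

theorem cost_le_mul_MMS (hc : AdditiveCost c) (hk : 0 < k) : c S ≤ k * MMS c k S := by
  have : Nonempty (Fin k) := ⟨⟨0, hk⟩⟩
  rw [← div_le_iff₀' (by exact_mod_cast hk)]
  refine le_MMS hk fun T hT => (div_le_iff₀' (by exact_mod_cast hk)).mpr ?_
  calc c S = ∑ j, c (T j) := (hc.sum_of_isPartitionOf hT).symm
    _ ≤ ∑ _j : Fin k, ⨆ j, c (T j) :=
      Finset.sum_le_sum fun j _ => le_ciSup (f := fun j => c (T j)) (Finite.bddAbove_range _) j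
    _ = k * ⨆ j, c (T j) := by simp

theorem cost_singleton_le_MMS (hc : AdditiveCost c) (hk : 0 < k) {e : E} (he : e ∈ S) :
    c {e} ≤ MMS c k S := by
  have : Nonempty (Fin k) := ⟨⟨0, hk⟩⟩
  refine le_MMS hk fun T hT => ?_
  obtain ⟨j, -, hj⟩ := Finset.mem_biUnion.mp (hT.2 ▸ he)
  exact (hc.mono (Finset.singleton_subset_iff.mpr hj)).trans
    (le_ciSup (f := fun j => c (T j)) (Finite.bddAbove_range _) j)

theorem MMS_nonneg (hc : AdditiveCost c) (hk : 0 < k) : 0 ≤ MMS c k S :=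
  nonneg_of_mul_nonneg_right ((hc.1 S).trans (cost_le_mul_MMS hc hk)) (by exact_mod_cast hk)

end MaximinShare

theorem IsEFX.pred_mul_sub_le {E : Type*} [DecidableEq E] [Fintype E] {n : ℕ} {α : ℝ}
    {c : Fin n → Finset E → ℝ} {A : Fin n → Finset E} (hEFX : IsEFX α c A) (hA : IsAllocation A)
    {i : Fin n} (hc : AdditiveCost (c i)) {e : E} (he : e ∈ A i) (hpos : 0 < c i {e}) :
    ((n : ℝ) - 1) * (c i (A i) - c i {e}) ≤ α * (c i Finset.univ - c i (A i)) := by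
  have hsum := Finset.sum_le_sum fun j (hj : j ∈ Finset.univ.erase i) =>
    hc.sdiff_singleton he ▸ hEFX i j (Finset.ne_of_mem_erase hj).symm e he hpos
  rw [← Finset.mul_sum, Finset.sum_erase_eq_sub (Finset.mem_univ i),
    Finset.sum_erase_eq_sub (Finset.mem_univ i), hc.sum_of_isPartitionOf hA] at hsum
  simp only [Finset.sum_const, Finset.card_univ, Fintype.card_fin, nsmul_eq_mul] at hsum
  linarith

theorem le_min_mul_of_pred_mul_sub_le {n α μ x s : ℝ} (hn : 1 ≤ n) (hα : 1 ≤ α) (hs : 0 ≤ s)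
    (hsμ : s ≤ μ) (henvy : (n - 1) * (x - s) ≤ α * (n * μ - x)) (hx : x = s ∨ 2 * s ≤ x) :
    x ≤ min (2 * n * α / (n - 1 + 2 * α)) ((n * α + n - 1) / (n - 1 + α)) * μ := by
  rw [min_mul_of_nonneg _ _ (hs.trans hsμ), le_min_iff, div_mul_eq_mul_div, div_mul_eq_mul_div,
    le_div_iff₀ (by linarith), le_div_iff₀ (by linarith)]
  constructor
  · rcases hx with rfl | hx
    · nlinarith [mul_nonneg (sub_nonneg.mpr hn) (by linarith : (0 : ℝ) ≤ 2 * α - 1)]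
    · nlinarith [mul_le_mul_of_nonneg_left hx (sub_nonneg.mpr hn)]
  · nlinarith [mul_le_mul_of_nonneg_left hsμ (sub_nonneg.mpr hn)]

theorem IsEFX.cost_le_min_mul_MMS {E : Type*} [DecidableEq E] [Fintype E] {n : ℕ} {α : ℝ}
    (hα : 1 ≤ α) {c : Fin n → Finset E → ℝ} {A : Fin n → Finset E} (hEFX : IsEFX α c A)
    (hA : IsAllocation A) {i : Fin n} (hc : AdditiveCost (c i)) :
    c i (A i) ≤ min (2 * (n : ℝ) * α / ((n : ℝ) - 1 + 2 * α))
      (((n : ℝ) * α + (n : ℝ) - 1) / ((n : ℝ) - 1 + α)) * MMS (c i) n Finset.univ := by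
  have hn : 0 < n := i.pos
  have hn' : (1 : ℝ) ≤ n := by exact_mod_cast hn
  rcases (hc.1 (A i)).eq_or_lt with hx | hx
  · rw [← hx]
    refine mul_nonneg (le_min ?_ ?_) (MMS_nonneg hc hn) <;>
      exact div_nonneg (by nlinarith) (by linarith)
  obtain ⟨e, he, hpos, hcases⟩ := hc.exists_pos_singleton_eq_or_two_mul_le hx
  refine le_min_mul_of_pred_mul_sub_le hn' hα hpos.le
    (cost_singleton_le_MMS hc hn (Finset.mem_univ e)) ?_ hcases
  exact (hEFX.pred_mul_sub_le hA hc he hpos).trans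
    (mul_le_mul_of_nonneg_left (by linarith [cost_le_mul_MMS hc hn (S := Finset.univ)])
      (by linarith))

theorem isPartitionOf_fiber {E : Type*} [DecidableEq E] [Fintype E] {k : ℕ} (f : E → Fin k) :
    IsPartitionOf (fun j => Finset.univ.filter fun x => f x = j) Finset.univ := by
  refine ⟨fun i j hij => Finset.disjoint_filter.mpr fun x _ hi hj => hij (hi ▸ hj), ?_⟩
  ext x
  simp

section Grid

variable {n : ℕ}

noncomputable def gridCost (w : Fin n → Fin n → ℝ) (S : Finset (Fin (n * n))) : ℝ :=
  ∑ x ∈ S, w (finProdFinEquiv.symm x).1 (finProdFinEquiv.symm x).2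

def gridRow (i : Fin n) : Finset (Fin (n * n)) :=
  Finset.univ.filter fun x => (finProdFinEquiv.symm x).1 = i

def gridCol (l : Fin n) : Finset (Fin (n * n)) :=
  Finset.univ.filter fun x => (finProdFinEquiv.symm x).2 = l

theorem additiveCost_gridCost {w : Fin n → Fin n → ℝ} (hw : ∀ i l, 0 ≤ w i l) :
    AdditiveCost (gridCost w) :=
  ⟨fun _ => Finset.sum_nonneg fun _ _ => hw _ _, fun S => by simp [gridCost]⟩

theorem gridCost_gridRow (w : Fin n → Fin n → ℝ) (i : Fin n) :
    gridCost w (gridRow i) = ∑ l, w i l := by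
  rw [gridCost, gridRow, Finset.sum_filter, ← finProdFinEquiv.sum_comp, Fintype.sum_prod_type]
  simp

theorem gridCost_gridCol (w : Fin n → Fin n → ℝ) (l : Fin n) :
    gridCost w (gridCol l) = ∑ i, w i l := by
  rw [gridCost, gridCol, Finset.sum_filter, ← finProdFinEquiv.sum_comp, Fintype.sum_prod_type]
  simp

end Grid

theorem sum_ite_eq_zero {n : ℕ} [NeZero n] (a b : ℝ) :
    ∑ i : Fin n, (if i = 0 then a else b) = a + (n - 1) * b := by
  rw [Finset.sum_ite, Finset.filter_eq', Finset.filter_ne']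
  simp [Nat.cast_sub NeZero.one_le]

theorem sum_ite_val_lt {n k : ℕ} (hk : k ≤ n) (a b : ℝ) :
    ∑ l : Fin n, (if (l : ℕ) < k then a else b) = k * a + (n - k) * b := by
  have hcard := Finset.card_filter_add_card_filter_not (s := (Finset.univ : Finset (Fin n)))
    (p := fun l : Fin n => (l : ℕ) < k)
  rw [Fin.card_filter_val_lt, Finset.card_univ, Fintype.card_fin, min_eq_right hk] at hcard
  rw [Finset.sum_ite, Finset.sum_const, Finset.sum_const, Fin.card_filter_val_lt, min_eq_right hk,
    nsmul_eq_mul, nsmul_eq_mul,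
    (by omega : (Finset.univ.filter fun l : Fin n => ¬ (l : ℕ) < k).card = n - k), Nat.cast_sub hk]

theorem exists_isEFX_not_isMMSFair_of_grid {n : ℕ} [NeZero n] {α β B : ℝ} (hβ : 0 ≤ β)
    (r g : Fin n → ℝ) (hr : ∀ l, 0 ≤ r l) (hg : ∀ l, 0 ≤ g l)
    (hEFX : ∀ l, 0 < r l → ∑ l', r l' - r l ≤ α * ∑ l', g l')
    (hcol : ∀ l, r l + (n - 1) * g l ≤ B) (hB : β * B < ∑ l, r l) :
    ∃ (m : ℕ) (c : Fin n → Finset (Fin m) → ℝ) (A : Fin n → Finset (Fin m)),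
      (∀ i, AdditiveCost (c i)) ∧ IsAllocation A ∧ IsEFX α c A ∧ ¬ IsMMSFair β c A := by
  set w : Fin n → Fin n → ℝ := fun i l => if i = 0 then r l else g l
  have hw : ∀ i l, 0 ≤ w i l := fun i l => by dsimp only [w]; split_ifs; exacts [hr l, hg l]
  have hc := additiveCost_gridCost hw
  refine ⟨n * n, fun i => if i = 0 then gridCost w else 0, gridRow,
    fun i => ?_, isPartitionOf_fiber _, fun i j hij x hx hpos => ?_, fun hfair => ?_⟩
  · dsimp only
    split_ifs
    exacts [hc, ⟨fun _ => le_rfl, fun _ => by simp⟩]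
  · dsimp only at hpos ⊢
    split_ifs at hpos ⊢ with hi
    · subst hi
      have hx0 : (finProdFinEquiv.symm x).1 = 0 := (Finset.mem_filter.mp hx).2
      have hxr : gridCost w {x} = r (finProdFinEquiv.symm x).2 := by
        rw [gridCost, Finset.sum_singleton, hx0]
        simp [w]
      rw [hxr] at hpos
      rw [hc.sdiff_singleton hx, hxr, gridCost_gridRow, gridCost_gridRow]
      simpa [w, Ne.symm hij] using hEFX _ hpos
    · exact absurd hpos (lt_irrefl 0)
  · have hMMS : MMS (gridCost w) n Finset.univ ≤ B := by
      refine (MMS_le_iSup (T := gridCol) hc.1 (isPartitionOf_fiber _)).trans (ciSup_le fun l => ?_)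
      rw [gridCost_gridCol, sum_ite_eq_zero (n := n) (r l) (g l)]
      exact hcol l
    have h0 := hfair 0
    simp only [if_pos, gridCost_gridRow, w] at h0
    linarith [mul_le_mul_of_nonneg_left hMMS hβ]

theorem exists_isEFX_not_isMMSFair_of_lt_alpha_ratio {n : ℕ} (hn : 2 ≤ n) {α β : ℝ}
    (hα : 0 ≤ α) (hβ : 0 ≤ β) (hlt : β < 2 * n * α / (2 * α + 2 * n - 3)) :
    ∃ (m : ℕ) (c : Fin n → Finset (Fin m) → ℝ) (A : Fin n → Finset (Fin m)),
      (∀ i, AdditiveCost (c i)) ∧ IsAllocation A ∧ IsEFX α c A ∧ ¬ IsMMSFair β c A := by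
  have : NeZero n := ⟨by omega⟩
  have hn' : (2 : ℝ) ≤ n := by exact_mod_cast hn
  rw [lt_div_iff₀ (by linarith)] at hlt
  refine exists_isEFX_not_isMMSFair_of_grid (B := n * α + (n - 1) * (n - 1)) hβ
    (fun _ => n * α) (fun _ => n - 1) (fun _ => by positivity) (fun _ => by linarith)
    (fun _ _ => ?_) (fun _ => le_rfl) ?_ <;>
    simp only [Finset.sum_const, Finset.card_univ, Fintype.card_fin, nsmul_eq_mul]
  · linarith
  · nlinarith [mul_le_mul_of_nonneg_left (by linarith : (0 : ℝ) ≤ n - 2) hβ]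

theorem exists_isEFX_not_isMMSFair_of_lt_two_mul_div_succ {n : ℕ} (hn : 2 ≤ n) {α β : ℝ}
    (hα : 1 ≤ α) (hβ : 0 ≤ β) (hlt : β < 2 * n / (n + 1)) :
    ∃ (m : ℕ) (c : Fin n → Finset (Fin m) → ℝ) (A : Fin n → Finset (Fin m)),
      (∀ i, AdditiveCost (c i)) ∧ IsAllocation A ∧ IsEFX α c A ∧ ¬ IsMMSFair β c A := by
  have : NeZero n := ⟨by omega⟩
  have hn' : (2 : ℝ) ≤ n := by exact_mod_cast hn
  rw [lt_div_iff₀ (by linarith)] at hlt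
  refine exists_isEFX_not_isMMSFair_of_grid (B := (n - 1) * (n + 1)) hβ
    (fun l => if (l : ℕ) < 2 then n * (n - 1) else 0) (fun l => if (l : ℕ) < 2 then 1 else n + 1)
    (fun _ => by split_ifs <;> nlinarith) (fun _ => by split_ifs <;> linarith)
    (fun l hl => ?_) (fun l => by split_ifs <;> linarith) ?_ <;>
    simp only [sum_ite_val_lt hn, Nat.cast_ofNat]
  · split_ifs at hl ⊢
    · nlinarith
    · exact absurd hl (lt_irrefl 0)
  · nlinarith

/-- Proposition 4.5: with additive cost functions, every `α`-EFX allocation is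
`min{2nα/(n-1+2α), (nα+n-1)/(n-1+α)}`-MMS, while it need not be `β`-MMS for any
`β < max{2nα/(2α+2n-3), 2n/(n+1)}`. -/
theorem alphaEFX_MMS_bounds :
    (∀ (E : Type) [DecidableEq E] [Fintype E] (n : ℕ), 2 ≤ n → ∀ α : ℝ, 1 ≤ α →
      ∀ c : Fin n → Finset E → ℝ, (∀ i, AdditiveCost (c i)) →
      ∀ A : Fin n → Finset E, IsAllocation A → IsEFX α c A →
        IsMMSFair (min (2 * (n : ℝ) * α / ((n : ℝ) - 1 + 2 * α))
          (((n : ℝ) * α + (n : ℝ) - 1) / ((n : ℝ) - 1 + α))) c A) ∧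
    (∀ n : ℕ, 2 ≤ n → ∀ α : ℝ, 1 ≤ α → ∀ β : ℝ, 1 ≤ β →
      β < max (2 * (n : ℝ) * α / (2 * α + 2 * (n : ℝ) - 3)) (2 * (n : ℝ) / ((n : ℝ) + 1)) →
      ∃ (m : ℕ) (c : Fin n → Finset (Fin m) → ℝ) (A : Fin n → Finset (Fin m)),
        (∀ i, AdditiveCost (c i)) ∧ IsAllocation A ∧ IsEFX α c A ∧
        ¬ IsMMSFair β c A) :=
  ⟨fun _ _ _ _ _ _ hα _ hc _ hA hEFX i => hEFX.cost_le_min_mul_MMS hα hA (hc i),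
    fun _ hn _ hα _ hβ hlt => (lt_max_iff.mp hlt).elim
      (exists_isEFX_not_isMMSFair_of_lt_alpha_ratio hn (by linarith) (by linarith))
      (exists_isEFX_not_isMMSFair_of_lt_two_mul_div_succ hn hα (by linarith))⟩
end

section
/- Assume all agents have additive cost functions. Every PMMS allocation is EFX. -/
open Finset

theorem isPartitionOf_pair {E : Type*} [DecidableEq E] {S T : Finset E} (h : Disjoint S T) :
    IsPartitionOf ![S, T] (S ∪ T) := by
  refine ⟨fun a b hab => ?_, ?_⟩
  · fin_cases a <;> fin_cases b
    all_goals first | exact absurd rfl hab | simpa using h | simpa using h.symm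
  · ext x
    simp [Fin.exists_fin_two]

theorem MMS_le_iSup_of_isPartitionOf {E : Type*} [DecidableEq E] {c : Finset E → ℝ}
    (hc : ∀ S, 0 ≤ c S) {k : ℕ} {T : Fin k → Finset E} {S : Finset E}
    (hT : IsPartitionOf T S) : MMS c k S ≤ ⨆ j, c (T j) := by
  refine csInf_le ⟨0, ?_⟩ ⟨T, hT, rfl⟩
  rintro m ⟨T', -, rfl⟩
  exact Real.iSup_nonneg fun j => hc (T' j)

theorem MMS_two_union_le_max {E : Type*} [DecidableEq E] {c : Finset E → ℝ}
    (hc : ∀ S, 0 ≤ c S) {S T : Finset E} (h : Disjoint S T) :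
    MMS c 2 (S ∪ T) ≤ max (c S) (c T) := by
  refine (MMS_le_iSup_of_isPartitionOf hc (isPartitionOf_pair h)).trans (ciSup_le fun j => ?_)
  fin_cases j <;> simp

namespace AdditiveCost

variable {E : Type*} [DecidableEq E] {c : Finset E → ℝ}

theorem erase_add_singleton (hc : AdditiveCost c) {S : Finset E} {e : E} (he : e ∈ S) :
    c (S.erase e) + c {e} = c S := by
  rw [hc.2 (S.erase e), hc.2 S]
  exact sum_erase_add _ _ he

theorem insert_eq_add_singleton (hc : AdditiveCost c) {S : Finset E} {e : E} (he : e ∉ S) :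
    c (insert e S) = c S + c {e} := by
  rw [hc.2 (insert e S), hc.2 S, sum_insert he, add_comm]

/-- Moving a positive-cost chore `e` from `S` to `T` leaves a partition of `S ∪ T` whose larger
part must be `insert e T`, since `S.erase e` is strictly cheaper than `S`. -/
theorem erase_le_of_le_MMS_two (hc : AdditiveCost c) {S T : Finset E} (hST : Disjoint S T)
    {e : E} (he : e ∈ S) (hpos : 0 < c {e}) (hS : c S ≤ MMS c 2 (S ∪ T)) :
    c (S.erase e) ≤ c T := by
  have heT : e ∉ T := disjoint_left.mp hST he
  have hsplit : S.erase e ∪ insert e T = S ∪ T := by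
    rw [union_insert, ← insert_union, insert_erase he]
  have hdisj : Disjoint (S.erase e) (insert e T) :=
    disjoint_insert_right.mpr ⟨notMem_erase e S, disjoint_of_subset_left (erase_subset e S) hST⟩
  have hmax : c S ≤ max (c (S.erase e)) (c (insert e T)) :=
    hS.trans (hsplit ▸ MMS_two_union_le_max hc.1 hdisj)
  have hS_eq : c (S.erase e) + c {e} = c S := hc.erase_add_singleton he
  rw [hc.insert_eq_add_singleton heT] at hmax
  rcases le_max_iff.mp hmax with h | h <;> linarith

end AdditiveCost

theorem PMMS_implies_EFX_general {E : Type*} [DecidableEq E] [Fintype E] {n : ℕ}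
    (c : Fin n → Finset E → ℝ) (hc : ∀ i, AdditiveCost (c i))
    (A : Fin n → Finset E) (hA : IsAllocation A) (hPMMS : IsPMMS 1 c A) :
    IsEFX 1 c A := by
  intro i j hij e he hpos
  rw [one_mul, sdiff_singleton_eq_erase]
  exact (hc i).erase_le_of_le_MMS_two (hA.1 i j hij) he hpos ((hPMMS i j hij).trans_eq (one_mul _))

/-- Proposition 5.1: with additive cost functions, every PMMS allocation is EFX. -/
theorem PMMS_implies_EFX {E : Type*} [DecidableEq E] [Fintype E] {n : ℕ} (hn : 2 ≤ n)
    (c : Fin n → Finset E → ℝ) (hc : ∀ i, AdditiveCost (c i))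
    (A : Fin n → Finset E) (hA : IsAllocation A) (hPMMS : IsPMMS 1 c A) :
    IsEFX 1 c A :=
  PMMS_implies_EFX_general c hc A hA hPMMS
end
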